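/- (1) Every right ideal R of nA* is generated, as a right ideal, by a unique initial factor code, namely by P = R \ (R·A_{ε,n}); i.e. R = P·nA*, P is an initial factor code, and any initial factor code generating R equals P. (2) If a right ideal R of nA* is generated by some joinless code, then the unique initial factor code generating R is joinless. -/

import Mathlib

namespace BrinThompson

abbrev W (A : Type*) (n : ℕ) : Type _ := Fin n → List A

variable {A : Type*} {n : ℕ}

/-- Coordinatewise concatenation in `nA*`. -/
def cat (u x : W A n) : W A n := fun i => u i ++ x i

/-- `u ≤_init v` : `u` is an initial factor of `v`. -/
def initLE (u v : W A n) : Prop := ∃ x : W A n, v = cat u x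

/-- `w` is the join (least upper bound) of `u` and `v` w.r.t. `≤_init`. -/
def isJoin (u v w : W A n) : Prop :=
  initLE u w ∧ initLE v w ∧ ∀ z : W A n, initLE u z → initLE v z → initLE w z

/-- `u` and `v` have a join. -/
def HasJoin (u v : W A n) : Prop := ∃ w : W A n, isJoin u v w

/-- A joinless code: no two distinct elements have a join. -/
def JoinlessCode (S : Set (W A n)) : Prop :=
  ∀ u ∈ S, ∀ v ∈ S, u ≠ v → ¬ HasJoin u v

/-- A maximal joinless code: joinless, and every element of `nA*` has a join
with some element of the code. -/
def MaxJoinlessCode (S : Set (W A n)) : Prop :=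
  JoinlessCode S ∧ ∀ x : W A n, ∃ p ∈ S, HasJoin x p

/-- The right ideal `C · nA*` generated by `C`. -/
def genIdeal (C : Set (W A n)) : Set (W A n) := {w | ∃ c ∈ C, ∃ x : W A n, w = cat c x}

def IsRightIdeal (R : Set (W A n)) : Prop := genIdeal R = R

/-- An initial factor code: pairwise `≤_init`-incomparable set. -/
def InitFactorCode (S : Set (W A n)) : Prop :=
  ∀ u ∈ S, ∀ v ∈ S, initLE u v → u = v

/-- `A_{ε,n}`: tuples with one coordinate a single letter and the rest empty. -/
def Aeps (A : Type*) (n : ℕ) : Set (W A n) :=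
  {w | ∃ i : Fin n, ∃ a : A, w i = [a] ∧ ∀ j : Fin n, j ≠ i → w j = []}

/-- `(ε)^n`, the tuple of empty strings. -/
def epsn (A : Type*) (n : ℕ) : W A n := fun _ => []

/-- `nA^ω`: `n`-tuples of one-sided infinite sequences over `A`. -/
abbrev Winf (A : Type*) (n : ℕ) : Type _ := Fin n → ℕ → A

/-- Concatenation of a finite tuple `p ∈ nA*` with an infinite tuple `u ∈ nA^ω`. -/
def catInf (p : W A n) (u : Winf A n) : Winf A n :=
  fun i k => if h : k < (p i).length then (p i).get ⟨k, h⟩ else u i (k - (p i).length)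

/-- `v` is an interior vertex of the `P`-dag: a strict initial factor of
some element of `P`. -/
def Interior (P : Set (W A n)) (v : W A n) : Prop := ∃ p ∈ P, initLE v p ∧ v ≠ p

/-- The child of `v` in direction `i`, extended by letter `a`. -/
def child (v : W A n) (i : Fin n) (a : A) : W A n := Function.update v i (v i ++ [a])

/-- A leaf of the interior dag of `P`: an interior vertex none of whose
children is interior. -/
def InteriorLeaf (P : Set (W A n)) (v : W A n) : Prop :=
  Interior P v ∧ ∀ (i : Fin n) (a : A), ¬ Interior P (child v i a)

/-- `v_+ = (v · A_{ε,n}) ∩ P`, the set of children of `v` belonging to `P`. -/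
def vplus (P : Set (W A n)) (v : W A n) : Set (W A n) :=
  {w | (∃ (i : Fin n) (a : A), w = child v i a) ∧ w ∈ P}

/-- The depth of a vertex: the sum of the coordinate lengths. -/
def depth (v : W A n) : ℕ := ∑ i, (v i).length

/-- One-step restriction of `P` at `(p, i)`. -/
def oneStep (P : Set (W A n)) (p : W A n) (i : Fin n) : Set (W A n) :=
  (P \ {p}) ∪ {w | ∃ a : A, w = child p i a}

/-- One step in a sequence of one-step restrictions. -/
def RestrStep (P Q : Set (W A n)) : Prop := ∃ p ∈ P, ∃ i : Fin n, Q = oneStep P p i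

/-- The box code `A^{k_1} × … × A^{k_n}`. -/
def box (A : Type*) {n : ℕ} (k : Fin n → ℕ) : Set (W A n) :=
  {w | ∀ i : Fin n, (w i).length = k i}

/-- Elementwise join `P ∨ Q` of two sets, ranging over the joins that exist. -/
def setJoin (P Q : Set (W A n)) : Set (W A n) :=
  {w | ∃ p ∈ P, ∃ q ∈ Q, isJoin p q w}

/-- `ℓ(S)`: the maximum coordinate length occurring in `S`. -/
noncomputable def ell (S : Set (W A n)) : ℕ :=
  sSup {m | ∃ z ∈ S, ∃ i : Fin n, (z i).length = m}

/-- An element of `n RI^fin_A`: an injective right ideal morphism of `nA*`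
whose domain code and image code are finite maximal joinless codes.
`toFun` is a total function whose values outside `Dom` are irrelevant. -/
structure RIMfin (A : Type*) (n : ℕ) where
  Dom : Set (W A n)
  toFun : W A n → W A n
  domC : Set (W A n)
  imC : Set (W A n)
  ideal : IsRightIdeal Dom
  morph : ∀ x ∈ Dom, ∀ w : W A n, toFun (cat x w) = cat (toFun x) w
  inj : Set.InjOn toFun Dom
  domC_gen : genIdeal domC = Dom
  imC_gen : genIdeal imC = toFun '' Dom
  domC_fin : domC.Finite
  domC_max : MaxJoinlessCode domC
  imC_fin : imC.Finite
  imC_max : MaxJoinlessCode imC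

/-- `ℓ(f) = max{ℓ(z) : z ∈ domC(f) ∪ imC(f)}`. -/
noncomputable def ellF (F : RIMfin A n) : ℕ := ell (F.domC ∪ F.imC)

/-- `G` extends `F` (as partial functions). -/
def Extends (F G : RIMfin A n) : Prop :=
  F.Dom ⊆ G.Dom ∧ ∀ x ∈ F.Dom, G.toFun x = F.toFun x

/-- `F` and `G` are equal as partial functions. -/
def EquivRIM (F G : RIMfin A n) : Prop :=
  F.Dom = G.Dom ∧ ∀ x ∈ F.Dom, F.toFun x = G.toFun x

/-- `G` is a maximal extension of `F` in `n RI^fin_A`. -/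
def MaxExtension (F G : RIMfin A n) : Prop :=
  Extends F G ∧ ∀ H : RIMfin A n, Extends G H → EquivRIM G H

/-!
If `u ∈ R` is a strict initial factor of `v`, drop the last letter of a coordinate in which `u` is
shorter than `v`: the result still lies above `u`, hence in `R`, so `v ∈ R·A_{ε,n}`. Hence
`P = R \ R·A_{ε,n}` is an initial factor code, and an initial factor code `Q` generating `R`
contains `P` (each `p ∈ P` lies above some `q ∈ Q`, not strictly) and lies in `P` (an element of
`R·A_{ε,n}` lies strictly above an element of `Q`). Induction on the total length shows that `P`
generates `R`. A joinless code is an initial factor code, since `u ≤_init v` makes `v` the join of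
`u` and `v`; by uniqueness it is `P`.
-/

def mulAeps (R : Set (W A n)) : Set (W A n) := {w | ∃ r ∈ R, ∃ a ∈ Aeps A n, w = cat r a}

lemma cat_assoc (u x y : W A n) : cat (cat u x) y = cat u (cat x y) :=
  funext fun _ => List.append_assoc _ _ _

lemma cat_epsn (u : W A n) : cat u (epsn A n) = u :=
  funext fun _ => List.append_nil _

lemma initLE_refl (u : W A n) : initLE u u := ⟨epsn A n, (cat_epsn u).symm⟩

lemma initLE_iff_isPrefix {u v : W A n} : initLE u v ↔ ∀ i, u i <+: v i := by
  refine ⟨fun ⟨x, hx⟩ i => ⟨x i, by rw [hx]; rfl⟩, fun h => ?_⟩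
  refine ⟨fun i => (v i).drop (u i).length, funext fun i => ?_⟩
  obtain ⟨t, ht⟩ := h i
  simp [cat, ← ht]

lemma depth_cat (u x : W A n) : depth (cat u x) = depth u + depth x := by
  simp [depth, cat, Finset.sum_add_distrib]

lemma depth_of_mem_Aeps {a : W A n} (ha : a ∈ Aeps A n) : depth a = 1 := by
  obtain ⟨i, b, hi, hj⟩ := ha
  rw [depth, Finset.sum_eq_single i (fun j _ hji => by simp [hj j hji]) (by simp)]
  simp [hi]

lemma subset_genIdeal (C : Set (W A n)) : C ⊆ genIdeal C :=
  fun c hc => ⟨c, hc, epsn A n, (cat_epsn c).symm⟩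

lemma IsRightIdeal.cat_mem {R : Set (W A n)} (hR : IsRightIdeal R) {r : W A n} (hr : r ∈ R)
    (x : W A n) : cat r x ∈ R :=
  hR ▸ ⟨r, hr, x, rfl⟩

lemma IsRightIdeal.genIdeal_subset {R C : Set (W A n)} (hR : IsRightIdeal R) (hC : C ⊆ R) :
    genIdeal C ⊆ R := by
  rintro _ ⟨c, hc, x, rfl⟩
  exact hR.cat_mem (hC hc) x

lemma IsRightIdeal.mem_of_initLE {R : Set (W A n)} (hR : IsRightIdeal R) {u v : W A n}
    (hu : u ∈ R) (huv : initLE u v) : v ∈ R := by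
  obtain ⟨x, rfl⟩ := huv
  exact hR.cat_mem hu x

lemma isJoin_of_initLE {u v : W A n} (huv : initLE u v) : isJoin u v v :=
  ⟨huv, initLE_refl v, fun _ _ hv => hv⟩

lemma JoinlessCode.initFactorCode {C : Set (W A n)} (hC : JoinlessCode C) : InitFactorCode C :=
  fun u hu v hv huv => by_contra fun hne => hC u hu v hv hne ⟨v, isJoin_of_initLE huv⟩

lemma exists_initLE_cat_Aeps_of_ne {u v : W A n} (huv : initLE u v) (hne : u ≠ v) :
    ∃ r a, initLE u r ∧ a ∈ Aeps A n ∧ v = cat r a := by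
  rw [initLE_iff_isPrefix] at huv
  obtain ⟨i, hi⟩ : ∃ i, u i ≠ v i := Function.ne_iff.mp hne
  obtain ⟨t, ht⟩ := huv i
  have htne : t ≠ [] := by rintro rfl; simp [← ht] at hi
  have hvne : v i ≠ [] := by simp [← ht, htne]
  refine ⟨Function.update v i (v i).dropLast, Function.update (epsn A n) i [(v i).getLast hvne],
    ?_, ⟨i, (v i).getLast hvne, by simp, fun j hj => by simp [hj, epsn]⟩, funext fun j => ?_⟩
  · refine initLE_iff_isPrefix.mpr fun j => ?_
    rcases eq_or_ne j i with rfl | hj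
    · simp only [Function.update_self, ← ht, List.dropLast_append_of_ne_nil htne]
      exact List.prefix_append _ _
    · simpa [hj] using huv j
  · rcases eq_or_ne j i with rfl | hj
    · simp [cat, List.dropLast_append_getLast hvne]
    · simp [cat, hj, epsn]

lemma IsRightIdeal.mem_mulAeps_of_initLE {R : Set (W A n)} (hR : IsRightIdeal R) {u v : W A n}
    (hu : u ∈ R) (huv : initLE u v) (hne : u ≠ v) : v ∈ mulAeps R := by
  obtain ⟨r, a, hur, ha, rfl⟩ := exists_initLE_cat_Aeps_of_ne huv hne
  exact ⟨r, hR.mem_of_initLE hu hur, a, ha, rfl⟩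

lemma subset_genIdeal_diff_mulAeps (R : Set (W A n)) : R ⊆ genIdeal (R \ mulAeps R) := by
  intro w hw
  induction hd : depth w using Nat.strong_induction_on generalizing w with
  | _ m ih =>
    by_cases hwM : w ∈ mulAeps R
    · obtain ⟨r, hr, a, ha, rfl⟩ := hwM
      have hlt : depth r < m := by rw [← hd, depth_cat, depth_of_mem_Aeps ha]; omega
      obtain ⟨p, hp, x, rfl⟩ := ih _ hlt hr rfl
      exact ⟨p, hp, cat x a, cat_assoc p x a⟩
    · exact subset_genIdeal _ ⟨hw, hwM⟩

lemma IsRightIdeal.genIdeal_diff_mulAeps {R : Set (W A n)} (hR : IsRightIdeal R) :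
    genIdeal (R \ mulAeps R) = R :=
  (hR.genIdeal_subset Set.sdiff_subset).antisymm (subset_genIdeal_diff_mulAeps R)

lemma IsRightIdeal.initFactorCode_diff_mulAeps {R : Set (W A n)} (hR : IsRightIdeal R) :
    InitFactorCode (R \ mulAeps R) :=
  fun _ hu _ hv huv => by_contra fun hne => hv.2 (hR.mem_mulAeps_of_initLE hu.1 huv hne)

lemma InitFactorCode.eq_diff_mulAeps {Q R : Set (W A n)} (hR : IsRightIdeal R)
    (hQ : InitFactorCode Q) (hQR : genIdeal Q = R) : Q = R \ mulAeps R := by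
  have hQsub : Q ⊆ R := hQR ▸ subset_genIdeal Q
  refine Set.Subset.antisymm (fun q hq => ⟨hQsub hq, ?_⟩) fun p hp => ?_
  · rintro ⟨r, hr, a, ha, rfl⟩
    rw [← hQR] at hr
    obtain ⟨q', hq', x, rfl⟩ := hr
    have hq'q : q' = cat q' (cat x a) :=
      (hQ q' hq' _ hq ⟨cat x a, cat_assoc _ _ _⟩).trans (cat_assoc _ _ _)
    have := congrArg depth hq'q
    rw [depth_cat, depth_cat, depth_of_mem_Aeps ha] at this
    omega
  · obtain ⟨q, hq, x, hx⟩ := hQR.symm ▸ hp.1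
    by_cases hqp : q = p
    · exact hqp ▸ hq
    · exact absurd (hR.mem_mulAeps_of_initLE (hQsub hq) ⟨x, hx⟩ hqp) hp.2

theorem rightIdeal_unique_initFactorCode_general {A : Type*}
    {n : ℕ} (R : Set (W A n)) (hR : IsRightIdeal R) :
    (genIdeal (R \ {w | ∃ r ∈ R, ∃ a ∈ Aeps A n, w = cat r a}) = R ∧
     InitFactorCode (R \ {w | ∃ r ∈ R, ∃ a ∈ Aeps A n, w = cat r a}) ∧
     (∀ Q : Set (W A n), InitFactorCode Q → genIdeal Q = R →
        Q = R \ {w | ∃ r ∈ R, ∃ a ∈ Aeps A n, w = cat r a})) ∧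
    ((∃ C : Set (W A n), JoinlessCode C ∧ genIdeal C = R) →
      JoinlessCode (R \ {w | ∃ r ∈ R, ∃ a ∈ Aeps A n, w = cat r a})) := by
  change (genIdeal (R \ mulAeps R) = R ∧ InitFactorCode (R \ mulAeps R) ∧
    ∀ Q, InitFactorCode Q → genIdeal Q = R → Q = R \ mulAeps R) ∧
    ((∃ C, JoinlessCode C ∧ genIdeal C = R) → JoinlessCode (R \ mulAeps R))
  refine ⟨⟨hR.genIdeal_diff_mulAeps, hR.initFactorCode_diff_mulAeps,
    fun Q hQ hQR => hQ.eq_diff_mulAeps hR hQR⟩, ?_⟩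
  rintro ⟨C, hC, hCR⟩
  rwa [← hC.initFactorCode.eq_diff_mulAeps hR hCR]

/-- Every right ideal of `nA*` is generated by a unique initial factor code,
namely `P = R \ R·A_{ε,n}`; and if `R` is generated by some joinless code then
this unique initial factor code is joinless. -/
theorem rightIdeal_unique_initFactorCode {A : Type*} [Fintype A] [Nonempty A]
    {n : ℕ} (hn : 1 ≤ n) (R : Set (W A n)) (hR : IsRightIdeal R) :
    (genIdeal (R \ {w | ∃ r ∈ R, ∃ a ∈ Aeps A n, w = cat r a}) = R ∧
     InitFactorCode (R \ {w | ∃ r ∈ R, ∃ a ∈ Aeps A n, w = cat r a}) ∧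
     (∀ Q : Set (W A n), InitFactorCode Q → genIdeal Q = R →
        Q = R \ {w | ∃ r ∈ R, ∃ a ∈ Aeps A n, w = cat r a})) ∧
    ((∃ C : Set (W A n), JoinlessCode C ∧ genIdeal C = R) →
      JoinlessCode (R \ {w | ∃ r ∈ R, ∃ a ∈ Aeps A n, w = cat r a})) :=
  rightIdeal_unique_initFactorCode_general R hR

end BrinThompson
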